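/- arXiv:2209.11924 — 2 statements merged into one kernel-verified Lean document; each statement's English description precedes it below -/
import Mathlib

section
/- Let d, n, p ≥ 1 and let Z ⊆ ℝ^d have nonempty interior. Let g(z) = G φ_p(z) where G ∈ ℝ^{n×M_{d,p}} has full column rank, let h(z̃) = H φ_p(z̃) for some H ∈ ℝ^{n×M_{d,p}}, and let f : ℝ^n → ℝ^d be any map such that h(f(x)) = x for every x ∈ g(Z) and such that f(g(Z)) has nonempty interior in ℝ^d. Then there exist an invertible matrix A ∈ ℝ^{d×d} and a vector c ∈ ℝ^d such that f(g(z)) = A z + c for all z ∈ Z. -/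
/-!
Let `ℓ` be a left inverse of `G`. On `Z` the reconstruction identity gives
`(ℓ H) φ_p(f(g z)) = φ_p(z)`, so every monomial `z^m` is a polynomial of degree `≤ p` in
`f(g z)`. Take `r_k` for `z_k` and `s_k` for `z_k^p`: the polynomials `r_k^p` and `s_k` agree on
`f(g(Z))`, which has nonempty interior, so `r_k^p = s_k` and `p · deg r_k ≤ p`. Thus each `r_k`
is affine, i.e. `z = B f(g z) + c` on `Z`; since `Z` has nonempty interior, `B` is invertible.
-/

/-- The finite set of multi-indices `m : Fin d → ℕ` (encoded with values in `Fin (p+1)`)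
with total degree `∑ k, m k ≤ p`. -/
abbrev MultiIdx (d p : ℕ) : Type := {m : Fin d → Fin (p + 1) // ∑ k, (m k : ℕ) ≤ p}

/-- The monomial feature map `φ_p(z)_m = ∏ k, z k ^ (m k)`. -/
noncomputable def phi (d p : ℕ) (z : Fin d → ℝ) : MultiIdx d p → ℝ :=
  fun m => ∏ k, z k ^ (m.1 k : ℕ)

open Matrix

namespace MvPolynomial

variable {σ R : Type*}

theorem totalDegree_pow_of_isDomain [CommRing R] [IsDomain R] {r : MvPolynomial σ R}
    (hr : r ≠ 0) (n : ℕ) : (r ^ n).totalDegree = n * r.totalDegree := by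
  induction n with
  | zero => simp
  | succ n ih =>
    rw [pow_succ, totalDegree_mul_of_isDomain (pow_ne_zero n hr) hr, ih]
    ring

theorem totalDegree_le_one_of_totalDegree_pow_le [CommRing R] [IsDomain R]
    {r : MvPolynomial σ R} {n : ℕ} (hn : 0 < n) (h : (r ^ n).totalDegree ≤ n) :
    r.totalDegree ≤ 1 := by
  rcases eq_or_ne r 0 with rfl | hr
  · simp
  rw [totalDegree_pow_of_isDomain hr] at h
  exact (Nat.mul_le_mul_left_iff hn).mp (by simpa using h)

theorem eq_C_add_sum_X_of_totalDegree_le_one [CommSemiring R] [Fintype σ]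
    {r : MvPolynomial σ R} (h : r.totalDegree ≤ 1) :
    r = C (coeff 0 r) + ∑ i, C (coeff (Finsupp.single i 1) r) * X i := by
  classical
  ext n
  simp only [coeff_add, coeff_C, coeff_sum, coeff_C_mul, coeff_X, mul_ite, mul_one, mul_zero]
  rcases eq_or_ne n 0 with rfl | h0
  · simp
  by_cases h1 : ∃ i, n = Finsupp.single i 1
  · obtain ⟨i, rfl⟩ := h1
    simp [Ne.symm h0, Finsupp.single_left_inj one_ne_zero]
  · have hdeg : r.totalDegree < ∑ i ∈ n.support, n i := by
      have h0' : ∑ i ∈ n.support, n i ≠ 0 := by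
        rwa [← Finsupp.degree_apply, ne_eq, Finsupp.degree_eq_zero_iff]
      have h1' : ∑ i ∈ n.support, n i ≠ 1 := fun h => h1 ((Finsupp.sum_eq_one_iff n).mp h)
      omega
    push Not at h1
    simp [Ne.symm h0, coeff_eq_zero_of_totalDegree_lt hdeg, fun i => (h1 i).symm]

/-- An open box is a product of infinite sets, so `funext_set` applies. -/
theorem funext_of_eqOn_of_nonempty_interior {𝕜 : Type*} [NontriviallyNormedField 𝕜]
    [Fintype σ] {P Q : MvPolynomial σ 𝕜} {S : Set (σ → 𝕜)} (hS : (interior S).Nonempty)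
    (h : S.EqOn (fun x => eval x P) (fun x => eval x Q)) : P = Q := by
  obtain ⟨x, hx⟩ := hS
  obtain ⟨ε, hε, hball⟩ := Metric.mem_nhds_iff.mp (isOpen_interior.mem_nhds hx)
  refine funext_set (fun i => Metric.ball (x i) ε)
    (fun i => infinite_of_mem_nhds (x i) (Metric.ball_mem_nhds _ hε)) fun y hy => ?_
  rw [← ball_pi x hε] at hy
  exact h (interior_subset (hball hy))

end MvPolynomial

section AffineInverse

variable {𝕜 m : Type*} [NontriviallyNormedField 𝕜] [Fintype m] [DecidableEq m]

theorem Matrix.isUnit_of_nonempty_interior_subset_range {B : Matrix m m 𝕜} {c : m → 𝕜}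
    {S : Set (m → 𝕜)} (hS : (interior S).Nonempty) (h : S ⊆ Set.range fun y => B *ᵥ y + c) :
    IsUnit B := by
  obtain ⟨x, hx⟩ := hS
  have hsub : (· - c) '' interior S ⊆ LinearMap.range B.mulVecLin := by
    rintro _ ⟨z, hz, rfl⟩
    obtain ⟨y, rfl⟩ := h (interior_subset hz)
    exact ⟨y, by simp⟩
  have htop := (LinearMap.range B.mulVecLin).eq_top_of_nonempty_interior'
    ⟨x - c, interior_maximal hsub (isOpenMap_sub_right c _ isOpen_interior) ⟨x, hx, rfl⟩⟩
  exact mulVec_surjective_iff_isUnit.mp (LinearMap.range_eq_top.mp htop)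

theorem exists_isUnit_affine_of_affine_leftInverse {q : (m → 𝕜) → m → 𝕜} {Z : Set (m → 𝕜)}
    (hZ : (interior Z).Nonempty) {B : Matrix m m 𝕜} {c : m → 𝕜}
    (hB : ∀ z ∈ Z, B *ᵥ q z + c = z) :
    ∃ (A : Matrix m m 𝕜) (c' : m → 𝕜), IsUnit A ∧ ∀ z ∈ Z, q z = A *ᵥ z + c' := by
  have hBu : IsUnit B :=
    Matrix.isUnit_of_nonempty_interior_subset_range hZ fun z hz => ⟨q z, hB z hz⟩
  refine ⟨B⁻¹, -(B⁻¹ *ᵥ c), isUnit_nonsing_inv_iff.mpr hBu, fun z hz => ?_⟩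
  calc q z = B⁻¹ *ᵥ (B *ᵥ q z + c) + -(B⁻¹ *ᵥ c) := by
        rw [mulVec_add, mulVec_mulVec, nonsing_inv_mul B ((isUnit_iff_isUnit_det B).mp hBu),
          one_mulVec, add_neg_cancel_right]
    _ = B⁻¹ *ᵥ z + -(B⁻¹ *ᵥ c) := by rw [hB z hz]

end AffineInverse

section PolynomialFeatures

open MvPolynomial

variable {d p : ℕ}

def MultiIdx.single (k : Fin d) (i : Fin (p + 1)) : MultiIdx d p :=
  ⟨Pi.single k i, by
    simpa [Pi.single_apply, apply_ite Fin.val] using Nat.le_of_lt_succ i.isLt⟩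

theorem phi_single (z : Fin d → ℝ) (k : Fin d) (i : Fin (p + 1)) :
    phi d p z (MultiIdx.single k i) = z k ^ (i : ℕ) := by
  simp [phi, MultiIdx.single, Pi.single_apply, apply_ite Fin.val]

noncomputable def featurePoly (w : MultiIdx d p → ℝ) : MvPolynomial (Fin d) ℝ :=
  ∑ m, C (w m) * ∏ k, X k ^ (m.1 k : ℕ)

theorem eval_featurePoly (w : MultiIdx d p → ℝ) (x : Fin d → ℝ) :
    eval x (featurePoly w) = w ⬝ᵥ phi d p x := by
  simp [featurePoly, phi, dotProduct]

theorem totalDegree_featurePoly_le (w : MultiIdx d p → ℝ) :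
    (featurePoly w).totalDegree ≤ p := by
  refine totalDegree_finsetSum_le fun m _ => (totalDegree_mul _ _).trans ?_
  rw [totalDegree_C, zero_add]
  refine (totalDegree_finsetProd _ _).trans ?_
  simpa using m.2

theorem exists_affine_leftInverse_of_mulVec_phi (hp : 1 ≤ p)
    (K : Matrix (MultiIdx d p) (MultiIdx d p) ℝ) {q : (Fin d → ℝ) → Fin d → ℝ}
    {Z : Set (Fin d → ℝ)} (hqZ : (interior (q '' Z)).Nonempty)
    (hK : ∀ z ∈ Z, K *ᵥ phi d p (q z) = phi d p z) :
    ∃ (B : Matrix (Fin d) (Fin d) ℝ) (c : Fin d → ℝ), ∀ z ∈ Z, B *ᵥ q z + c = z := by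
  have heval : ∀ z ∈ Z, ∀ k i,
      eval (q z) (featurePoly (K (MultiIdx.single k i))) = z k ^ (i : ℕ) := fun z hz k i => by
    rw [eval_featurePoly, ← phi_single, ← hK z hz]
    rfl
  set r : Fin d → MvPolynomial (Fin d) ℝ :=
    fun k => featurePoly (K (MultiIdx.single k ⟨1, by omega⟩))
  have hpow : ∀ k, r k ^ p = featurePoly (K (MultiIdx.single k (Fin.last p))) := fun k =>
    funext_of_eqOn_of_nonempty_interior hqZ <| by
      rintro _ ⟨z, hz, rfl⟩
      simp [r, heval z hz]
  have hdeg : ∀ k, (r k).totalDegree ≤ 1 := fun k =>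
    totalDegree_le_one_of_totalDegree_pow_le hp (hpow k ▸ totalDegree_featurePoly_le _)
  refine ⟨.of fun k i => coeff (Finsupp.single i 1) (r k), fun k => coeff 0 (r k),
    fun z hz => funext fun k => ?_⟩
  have hk := congrArg (eval (q z)) (eq_C_add_sum_X_of_totalDegree_le_one (hdeg k))
  rw [heval z hz k] at hk
  simpa [mulVec, dotProduct, add_comm, mul_comm] using hk.symm

end PolynomialFeatures

theorem affine_identification_general
    (d n p : ℕ) (hp : 1 ≤ p)
    (Z : Set (Fin d → ℝ)) (hZ : (interior Z).Nonempty)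
    (G H : Matrix (Fin n) (MultiIdx d p) ℝ)
    (hG : Function.Injective G.mulVec)
    (f : (Fin n → ℝ) → (Fin d → ℝ))
    (hrec : ∀ x ∈ (fun z => G.mulVec (phi d p z)) '' Z, H.mulVec (phi d p (f x)) = x)
    (himg : (interior (f '' ((fun z => G.mulVec (phi d p z)) '' Z))).Nonempty) :
    ∃ (A : Matrix (Fin d) (Fin d) ℝ) (c : Fin d → ℝ), IsUnit A ∧
      ∀ z ∈ Z, f (G.mulVec (phi d p z)) = A.mulVec z + c := by
  obtain ⟨ℓ, hℓ⟩ :=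
    LinearMap.exists_leftInverse_of_injective G.mulVecLin (LinearMap.ker_eq_bot.mpr hG)
  have hK : ∀ z ∈ Z, LinearMap.toMatrix' (ℓ ∘ₗ H.mulVecLin) *ᵥ phi d p (f (G *ᵥ phi d p z))
      = phi d p z := fun z hz => by
    rw [LinearMap.toMatrix'_mulVec, LinearMap.comp_apply, mulVecLin_apply,
      hrec _ ⟨z, hz, rfl⟩]
    exact LinearMap.congr_fun hℓ _
  rw [Set.image_image] at himg
  obtain ⟨B, c, hB⟩ := exists_affine_leftInverse_of_mulVec_phi hp _ himg hK
  exact exists_isUnit_affine_of_affine_leftInverse hZ hB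

/-- **affine identification with polynomial decoders.**
If the latent support `Z` has nonempty interior, the true decoder `g(z) = G φ_p(z)` has a
full-column-rank coefficient matrix, the learned decoder is `h(z̃) = H φ_p(z̃)`, the
encoder `f` satisfies the reconstruction identity `h (f x) = x` on `g(Z)`, and `f(g(Z))`
has nonempty interior, then `f ∘ g` is an invertible affine map on `Z`:
`f (g z) = A z + c` with `A` invertible. -/
theorem affine_identification
    (d n p : ℕ) (hd : 1 ≤ d) (hn : 1 ≤ n) (hp : 1 ≤ p)
    (Z : Set (Fin d → ℝ)) (hZ : (interior Z).Nonempty)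
    (G H : Matrix (Fin n) (MultiIdx d p) ℝ)
    (hG : Function.Injective G.mulVec)
    (f : (Fin n → ℝ) → (Fin d → ℝ))
    (hrec : ∀ x ∈ (fun z => G.mulVec (phi d p z)) '' Z, H.mulVec (phi d p (f x)) = x)
    (himg : (interior (f '' ((fun z => G.mulVec (phi d p z)) '' Z))).Nonempty) :
    ∃ (A : Matrix (Fin d) (Fin d) ℝ) (c : Fin d → ℝ), IsUnit A ∧
      ∀ z ∈ Z, f (G.mulVec (phi d p z)) = A.mulVec z + c :=
  affine_identification_general d n p hp Z hZ G H hG f hrec himg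
end

section
/- Let a, b ∈ ℝ^d with a₁ > 0 and b₁ > 0, and let ε satisfy 0 < ε < 1/(1/a₁ + 1/b₁). Then there is no z ∈ [−1,1]^d such that both aᵀz < −‖a‖₁ + ε and bᵀz > ‖b‖₁ − ε hold, where ‖·‖₁ denotes the ℓ₁ norm. -/
/-! Only the shared coordinate matters: on the cube, `aᵀz + ‖a‖₁ ≥ a₁ (1 + z₁)` and
`‖b‖₁ - bᵀz ≥ b₁ (1 - z₁)`, so both near-extremes force `1 + z₁ < ε / a₁` and `1 - z₁ < ε / b₁`.
Adding them gives `2 < ε (1/a₁ + 1/b₁) < 1`. -/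

open Finset

section Cube

variable {ι : Type*} [Fintype ι] [DecidableEq ι] {c z : ι → ℝ}

theorem mul_le_abs_of_abs_le_one {x y : ℝ} (hy : |y| ≤ 1) : x * y ≤ |x| :=
  calc x * y ≤ |x * y| := le_abs_self _
    _ = |x| * |y| := abs_mul x y
    _ ≤ |x| := mul_le_of_le_one_right (abs_nonneg x) hy

theorem sum_mul_le_of_abs_le_one (hz : ∀ k, |z k| ≤ 1) (i : ι) :
    ∑ k, c k * z k ≤ c i * z i + (∑ k, |c k| - |c i|) := by
  have hrest : ∑ k ∈ univ.erase i, c k * z k ≤ ∑ k ∈ univ.erase i, |c k| :=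
    sum_le_sum fun k _ => mul_le_abs_of_abs_le_one (hz k)
  rw [← add_sum_erase _ _ (mem_univ i), ← add_sum_erase _ (fun k => |c k|) (mem_univ i)]
  linarith

theorem le_sum_mul_of_abs_le_one (hz : ∀ k, |z k| ≤ 1) (i : ι) :
    c i * z i - (∑ k, |c k| - |c i|) ≤ ∑ k, c k * z k := by
  have h := sum_mul_le_of_abs_le_one (c := -c) hz i
  simp only [Pi.neg_apply, neg_mul, sum_neg_distrib, abs_neg] at h
  linarith

end Cube

theorem two_lt_mul_inv_add_inv {a b ε t : ℝ} (ha : 0 < a) (hb : 0 < b)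
    (hat : a * (1 + t) < ε) (hbt : b * (1 - t) < ε) : 2 < ε * (1 / a + 1 / b) := by
  have h1 : 1 + t < ε / a := by rw [lt_div_iff₀ ha]; linarith
  have h2 : 1 - t < ε / b := by rw [lt_div_iff₀ hb]; linarith
  calc (2 : ℝ) = (1 + t) + (1 - t) := by ring
    _ < ε / a + ε / b := add_lt_add h1 h2
    _ = ε * (1 / a + 1 / b) := by ring

theorem no_simultaneous_near_extremes_general
    (d : ℕ) (hd : 0 < d) (a b : Fin d → ℝ)
    (ha : 0 < a ⟨0, hd⟩) (hb : 0 < b ⟨0, hd⟩)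
    (ε : ℝ)
    (hε' : ε < 1 / (1 / a ⟨0, hd⟩ + 1 / b ⟨0, hd⟩)) :
    ¬ ∃ z : Fin d → ℝ, (∀ k, z k ∈ Set.Icc (-1 : ℝ) 1) ∧
      (∑ k, a k * z k) < -(∑ k, |a k|) + ε ∧
      (∑ k, b k * z k) > (∑ k, |b k|) - ε := by
  rintro ⟨z, hz, hA, hB⟩
  set i : Fin d := ⟨0, hd⟩
  have hz1 : ∀ k, |z k| ≤ 1 := fun k => abs_le.mpr (hz k)
  have hAi := le_sum_mul_of_abs_le_one (c := a) hz1 i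
  have hBi := sum_mul_le_of_abs_le_one (c := b) hz1 i
  rw [abs_of_pos ha] at hAi
  rw [abs_of_pos hb] at hBi
  have h2 := two_lt_mul_inv_add_inv ha hb (ε := ε) (t := z i) (by linarith) (by linarith)
  have h1 : ε * (1 / a i + 1 / b i) < 1 := by
    rwa [lt_div_iff₀ (by positivity)] at hε'
  linarith

/-- **incompatibility of simultaneous near-extremes.**  If `a` and `b`
both have positive first coordinate and `0 < ε < 1/(1/a₁ + 1/b₁)`, then no `z` in the
cube `[−1,1]^d` satisfies both `aᵀz < −‖a‖₁ + ε` and `bᵀz > ‖b‖₁ − ε`. -/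
theorem no_simultaneous_near_extremes
    (d : ℕ) (hd : 0 < d) (a b : Fin d → ℝ)
    (ha : 0 < a ⟨0, hd⟩) (hb : 0 < b ⟨0, hd⟩)
    (ε : ℝ) (hε : 0 < ε)
    (hε' : ε < 1 / (1 / a ⟨0, hd⟩ + 1 / b ⟨0, hd⟩)) :
    ¬ ∃ z : Fin d → ℝ, (∀ k, z k ∈ Set.Icc (-1 : ℝ) 1) ∧
      (∑ k, a k * z k) < -(∑ k, |a k|) + ε ∧
      (∑ k, b k * z k) > (∑ k, |b k|) - ε :=
  no_simultaneous_near_extremes_general d hd a b ha hb ε hε'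
end
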